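/- The asymmetric shift coefficient a_t = √(α_{t-1})·√(1-α_t)/√(α_t) satisfies a_t = √((1-α_t)/(1-β_t)) ≥ √(1-α_{t-1}) > 0 when α_{t-1} < 1; in particular the asymmetric process change dominates (in absolute value) the symmetric-process change c_t = √(1-α_{t-1}) - √((1-α_t)/(1-β_t)). -/

import Mathlib

/-! The identity `α_t = α_{t-1}(1-β_t)` turns `a_t` into `√((1-α_t)/(1-β_t))`, and
`(1-α_t)/(1-β_t) - (1-α_{t-1}) = β_t/(1-β_t) ≥ 0`. Hence `0 < √(1-α_{t-1}) ≤ a_t`, so `c_t ∈ [-a_t, 0]`. -/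

namespace Real

theorem sqrt_mul_sqrt_div_sqrt_mul {a q : ℝ} (x : ℝ) (ha : 0 < a) (hq : 0 ≤ q) :
    √a * √x / √(a * q) = √(x / q) := by
  have hsa : √a ≠ 0 := (sqrt_pos.2 ha).ne'
  rw [sqrt_mul ha.le, sqrt_div' x hq, mul_div_mul_left _ _ hsa]

end Real

theorem one_sub_le_one_sub_mul_div {β : ℝ} (a : ℝ) (hβ0 : 0 ≤ β) (hβ1 : β < 1) :
    1 - a ≤ (1 - a * (1 - β)) / (1 - β) := by
  rw [le_div_iff₀ (sub_pos.2 hβ1)]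
  nlinarith

/-- The asymmetric shift coefficient `aₜ = √(α_{t-1})√(1-αₜ)/√(αₜ)` equals
`√((1-αₜ)/(1-βₜ))`, is at least `√(1-α_{t-1}) > 0`, and dominates `|cₜ|`. -/
theorem stmt_5 (β αp αt : ℝ) (hβ0 : 0 < β) (hβ1 : β < 1)
    (hαp0 : 0 < αp) (hαp1 : αp < 1) (hαt : αt = αp * (1 - β)) :
    Real.sqrt αp * Real.sqrt (1 - αt) / Real.sqrt αt = Real.sqrt ((1 - αt) / (1 - β)) ∧
    Real.sqrt (1 - αp) ≤ Real.sqrt αp * Real.sqrt (1 - αt) / Real.sqrt αt ∧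
    0 < Real.sqrt αp * Real.sqrt (1 - αt) / Real.sqrt αt ∧
    |Real.sqrt (1 - αp) - Real.sqrt ((1 - αt) / (1 - β))|
      ≤ Real.sqrt αp * Real.sqrt (1 - αt) / Real.sqrt αt := by
  subst hαt
  have hcoeff := Real.sqrt_mul_sqrt_div_sqrt_mul (1 - αp * (1 - β)) hαp0 (sub_pos.2 hβ1).le
  have hle : √(1 - αp) ≤ √((1 - αp * (1 - β)) / (1 - β)) :=
    Real.sqrt_le_sqrt (one_sub_le_one_sub_mul_div αp hβ0.le hβ1)
  have hpos : 0 < √(1 - αp) := Real.sqrt_pos.2 (sub_pos.2 hαp1)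
  rw [hcoeff]
  exact ⟨rfl, hle, hpos.trans_le hle,
    abs_sub_le_of_nonneg_of_le (Real.sqrt_nonneg _) hle (Real.sqrt_nonneg _) le_rfl⟩
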